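/- arXiv:0911.0134 — 4 statements merged into one kernel-verified Lean document; each statement's English description precedes it below -/
import Mathlib

section
/- Let E be an oriented tree set in a connected infinite graph X with M = max{diam(∂C) : C ∈ E} < ∞. If some element of E is not contained in a maximal element of E, then there is a strictly increasing sequence (C_k) in E whose union is all of X, and every C ∈ E satisfies C ⊆ C_k for some k. -/
def graphBoundary {V : Type*} (G : SimpleGraph V) (C : Set V) : Set V :=
  {x | x ∈ C ∧ ∃ y, y ∉ C ∧ G.Adj x y}

def IsCut {V : Type*} (G : SimpleGraph V) (C : Set V) : Prop :=
  C.Infinite ∧ (G.induce C).Connected ∧ (graphBoundary G C).Finite ∧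
    (graphBoundary G C).Nonempty

def NonCrossing {V : Type*} (C D : Set V) : Prop :=
  C ⊆ D ∨ D ⊆ C ∨ C ∩ D = ∅

def IsTreeSet {V : Type*} (G : SimpleGraph V) (E : Set (Set V)) : Prop :=
  E.Nonempty ∧ (∀ C ∈ E, IsCut G C) ∧
    ∀ C ∈ E, ∀ D ∈ E, C ≠ D → NonCrossing C D

/-!
Fix `x₀ ∈ C₀` and suppose some vertex `v` lies in no member of the chain. Every boundary
`∂Cₖ` meets a fixed path from `x₀` to `v`, so by the diameter bound all of them lie in a
finite set `S`. A set whose boundary lies in `S` is determined by its trace on the closed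
neighbourhood of `S`, so only finitely many sets can occur: impossible for a strictly
increasing chain. Once the chain exhausts `X`, a cut `C ∈ E` meeting `Cₖ` and not contained
in any `Cₖ` would contain all of them, hence be everything, and so have empty boundary.
-/

theorem exists_strictMono_of_forall_exists_gt {α : Type*} [Preorder α] {s : Set α} {a : α}
    (ha : a ∈ s) (h : ∀ b ∈ s, a ≤ b → ∃ c ∈ s, b < c) :
    ∃ f : ℕ → α, StrictMono f ∧ (∀ k, f k ∈ s) ∧ f 0 = a := by
  let T := {b // b ∈ s ∧ a ≤ b}
  have : NoMaxOrder T := ⟨fun b ↦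
    let ⟨c, hc, hbc⟩ := h b.1 b.2.1 b.2.2
    ⟨⟨c, hc, b.2.2.trans hbc.le⟩, hbc⟩⟩
  obtain ⟨g, hg, hg0⟩ := Nat.exists_strictMono' (⟨a, ha, le_rfl⟩ : T)
  exact ⟨fun k ↦ (g k).1, (Subtype.strictMono_coe _).comp hg, fun k ↦ (g k).2.1,
    congrArg Subtype.val hg0⟩

theorem exists_subset_of_nonCrossing {V : Type*} {f : ℕ → Set V} (hf : Monotone f)
    (hU : ⋃ k, f k = Set.univ) {C : Set V} (hC : C.Nonempty) (hCU : C ≠ Set.univ)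
    (hnc : ∀ k, NonCrossing C (f k)) : ∃ k, C ⊆ f k := by
  obtain ⟨x, hx⟩ := hC
  obtain ⟨k₀, hk₀⟩ := Set.mem_iUnion.1 (hU ▸ Set.mem_univ x)
  by_contra! hsub
  refine hCU (Set.eq_univ_of_univ_subset (hU ▸ Set.iUnion_subset fun k ↦ ?_))
  refine (hf (le_max_left k k₀)).trans ?_
  rcases hnc (max k k₀) with h | h | h
  · exact absurd h (hsub _)
  · exact h
  · exact absurd h (Set.nonempty_iff_ne_empty.1 ⟨x, hx, hf (le_max_right k k₀) hk₀⟩)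

theorem ne_univ_of_graphBoundary_nonempty {V : Type*} {G : SimpleGraph V} {C : Set V}
    (h : (graphBoundary G C).Nonempty) : C ≠ Set.univ := by
  rintro rfl
  obtain ⟨_, -, _, hy, -⟩ := h
  exact hy trivial

theorem IsTreeSet.nonCrossing {V : Type*} {G : SimpleGraph V} {E : Set (Set V)}
    (hE : IsTreeSet G E) {C D : Set V} (hC : C ∈ E) (hD : D ∈ E) : NonCrossing C D := by
  obtain rfl | hCD := eq_or_ne C D
  · exact Or.inl subset_rfl
  · exact hE.2.2 C hC D hD hCD

namespace SimpleGraph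

variable {V : Type*} {G : SimpleGraph V}

theorem Walk.exists_mem_support_mem_graphBoundary {C : Set V} {u v : V} (p : G.Walk u v)
    (hu : u ∈ C) (hv : v ∉ C) : ∃ w ∈ p.support, w ∈ graphBoundary G C := by
  obtain ⟨d, hd, hfst, hsnd⟩ := p.exists_boundary_dart C hu hv
  exact ⟨d.fst, p.dart_fst_mem_support_of_mem_darts hd, hfst, d.snd, hsnd, d.adj⟩

theorem Connected.finite_setOf_dist_le [G.LocallyFinite] (hconn : G.Connected) (x : V)
    (n : ℕ) : {y | G.dist x y ≤ n}.Finite := by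
  induction n with
  | zero =>
    refine (Set.finite_singleton x).subset fun y hy ↦ ?_
    exact ((hconn.dist_eq_zero_iff).1 (Nat.le_zero.1 hy)).symm
  | succ n ih =>
    refine (ih.union (ih.biUnion fun z _ ↦ (G.neighborSet z).toFinite)).subset fun y hy ↦ ?_
    obtain ⟨p, hp⟩ := (hconn.preconnected y x).exists_walk_length_eq_dist
    cases p with
    | nil => exact Or.inl (by simp)
    | @cons _ z _ hyz q =>
      have hz : G.dist x z ≤ n := by
        have := SimpleGraph.dist_le q.reverse
        rw [Walk.length_reverse] at this
        rw [Walk.length_cons, dist_comm] at hp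
        replace hy : G.dist x y ≤ n + 1 := hy
        omega
      exact Or.inr (Set.mem_biUnion hz hyz.symm)

theorem Connected.subset_of_inter_eq (hconn : G.Connected) {C D S S' : Set V}
    (hD : D.Nonempty) (hSS' : S ⊆ S') (hN : ∀ x y, G.Adj x y → y ∈ S → x ∈ S')
    (hCS : graphBoundary G C ⊆ S) (hDS : graphBoundary G D ⊆ S) (heq : C ∩ S' = D ∩ S') :
    C ⊆ D := by
  intro v hvC
  by_contra hvD
  obtain ⟨d, hd⟩ := hD
  obtain ⟨e, -, ⟨haC, haD⟩, hb⟩ :=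
    (hconn.preconnected v d).some.exists_boundary_dart (C \ D) ⟨hvC, hvD⟩ fun h ↦ h.2 hd
  have ha : e.fst ∈ S' := by
    by_cases hbC : e.snd ∈ C
    · have hbD : e.snd ∈ D := by_contra fun h ↦ hb ⟨hbC, h⟩
      exact hN _ _ e.adj (hDS ⟨hbD, e.fst, haD, e.adj.symm⟩)
    · exact hSS' (hCS ⟨haC, e.snd, hbC, e.adj⟩)
  exact haD (heq.subset ⟨haC, ha⟩).1

theorem Connected.finite_setOf_graphBoundary_dist_le [G.LocallyFinite] (hconn : G.Connected)
    (x v : V) (M : ℕ) :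
    {C : Set V | x ∈ C ∧ v ∉ C ∧
      ∀ a ∈ graphBoundary G C, ∀ b ∈ graphBoundary G C, G.dist a b ≤ M}.Finite := by
  obtain ⟨W⟩ := hconn.preconnected x v
  set S : Set V := ⋃ w ∈ {w | w ∈ W.support}, {y | G.dist w y ≤ M}
  set S' : Set V := S ∪ ⋃ y ∈ S, G.neighborSet y
  have hS : S.Finite :=
    W.support.finite_toSet.biUnion fun w _ ↦ hconn.finite_setOf_dist_le w M
  have hS' : S'.Finite := hS.union (hS.biUnion fun y _ ↦ (G.neighborSet y).toFinite)
  have hN : ∀ a b, G.Adj a b → b ∈ S → a ∈ S' :=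
    fun a b hab hb ↦ Or.inr (Set.mem_biUnion hb hab.symm)
  have hbdry : ∀ C : Set V, x ∈ C → v ∉ C →
      (∀ a ∈ graphBoundary G C, ∀ b ∈ graphBoundary G C, G.dist a b ≤ M) →
      graphBoundary G C ⊆ S := by
    intro C hxC hvC hM z hz
    obtain ⟨w, hw, hwC⟩ := W.exists_mem_support_mem_graphBoundary hxC hvC
    exact Set.mem_biUnion hw (hM w hwC z hz)
  refine Set.Finite.of_finite_image (f := (· ∩ S')) (hS'.finite_subsets.subset ?_) ?_
  · rintro _ ⟨C, -, rfl⟩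
    exact Set.inter_subset_right
  · rintro C ⟨hxC, hvC, hMC⟩ D ⟨hxD, hvD, hMD⟩ h
    have hC := hbdry C hxC hvC hMC
    have hD := hbdry D hxD hvD hMD
    exact (hconn.subset_of_inter_eq ⟨x, hxD⟩ Set.subset_union_left hN hC hD h).antisymm
      (hconn.subset_of_inter_eq ⟨x, hxC⟩ Set.subset_union_left hN hD hC h.symm)

theorem Connected.iUnion_eq_univ_of_strictMono [G.LocallyFinite] (hconn : G.Connected)
    {f : ℕ → Set V} (hf : StrictMono f) (hne : (f 0).Nonempty) {M : ℕ}
    (hM : ∀ k, ∀ a ∈ graphBoundary G (f k), ∀ b ∈ graphBoundary G (f k), G.dist a b ≤ M) :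
    ⋃ k, f k = Set.univ := by
  obtain ⟨x, hx⟩ := hne
  refine Set.eq_univ_of_forall fun v ↦ ?_
  by_contra hv
  simp only [Set.mem_iUnion, not_exists] at hv
  exact Set.infinite_range_of_injective hf.injective
    ((hconn.finite_setOf_graphBoundary_dist_le x v M).subset
      (Set.range_subset_iff.2 fun k ↦ ⟨hf.monotone (Nat.zero_le k) hx, hv k, hM k⟩))

end SimpleGraph

theorem stmt1_general {V : Type*} (G : SimpleGraph V)
    (hconn : G.Connected) (hlf : G.LocallyFinite)
    (E : Set (Set V)) (hE : IsTreeSet G E)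
    (M : ℕ)
    (hM : ∀ C ∈ E, ∀ x ∈ graphBoundary G C, ∀ y ∈ graphBoundary G C,
      G.dist x y ≤ M)
    (hnomax : ∃ C ∈ E, ∀ D ∈ E, C ⊆ D → (∃ D' ∈ E, D ⊂ D')) :
    ∃ Cseq : ℕ → Set V, (∀ k, Cseq k ∈ E) ∧ StrictMono Cseq ∧
      (⋃ k, Cseq k) = Set.univ ∧ ∀ C ∈ E, ∃ k, C ⊆ Cseq k := by
  have := hlf
  obtain ⟨C₀, hC₀, hnomax⟩ := hnomax
  obtain ⟨f, hf, hfE, hf0⟩ := exists_strictMono_of_forall_exists_gt hC₀ hnomax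
  have hU : ⋃ k, f k = Set.univ :=
    hconn.iUnion_eq_univ_of_strictMono hf (hf0 ▸ (hE.2.1 C₀ hC₀).1.nonempty)
      fun k ↦ hM _ (hfE k)
  refine ⟨f, hfE, hf, hU, fun C hC ↦ ?_⟩
  have hcut := hE.2.1 C hC
  exact exists_subset_of_nonCrossing hf.monotone hU hcut.1.nonempty
    (ne_univ_of_graphBoundary_nonempty hcut.2.2.2) fun k ↦ hE.nonCrossing hC (hfE k)

/-- If an oriented tree set (with uniformly bounded boundary diameters) has an element
that is not contained in any maximal element, then there is a strictly increasing
sequence in `E` exhausting `X`, and every element of `E` lies in some member of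
the sequence. -/
theorem stmt1 {V : Type*} [Infinite V] (G : SimpleGraph V)
    (hconn : G.Connected) (hlf : G.LocallyFinite)
    (E : Set (Set V)) (hE : IsTreeSet G E)
    (M : ℕ)
    (hM : ∀ C ∈ E, ∀ x ∈ graphBoundary G C, ∀ y ∈ graphBoundary G C,
      G.dist x y ≤ M)
    (hnomax : ∃ C ∈ E, ∀ D ∈ E, C ⊆ D → (∃ D' ∈ E, D ⊂ D')) :
    ∃ Cseq : ℕ → Set V, (∀ k, Cseq k ∈ E) ∧ StrictMono Cseq ∧
      (⋃ k, Cseq k) = Set.univ ∧ ∀ C ∈ E, ∃ k, C ⊆ Cseq k :=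
  stmt1_general G hconn hlf E hE M hM hnomax
end

section
/- Let E be an oriented tree set of cuts in a connected graph X. For any C ∈ E and any vertex x ∈ C, the set {C' ∈ E : x ∈ C' ⊆ C} is finite; and for any C, D ∈ E with D ⊆ C, the set {C' ∈ E : D ⊆ C' ⊆ C} is finite. -/
namespace SimpleGraph

variable {V : Type*} {G : SimpleGraph V}

theorem finite_ball [G.LocallyFinite] (c : V) (n : ℕ) : (G.ball c n).Finite := by
  induction n with
  | zero => simp
  | succ n ih =>
    refine ((ih.biUnion fun u _ ↦ (G.neighborSet u).toFinite).insert c).subset ?_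
    intro v hv
    obtain ⟨k, hk⟩ := ENat.ne_top_iff_exists.mp (mem_ball.mp hv).ne_top
    obtain ⟨p, hp⟩ := exists_walk_of_edist_eq_coe hk.symm
    cases p with
    | nil => exact Set.mem_insert _ _
    | cons h q =>
      have hlt : q.length < n := by
        have := mem_ball.mp hv
        rw [← hk, ← hp, Walk.length_cons] at this
        norm_cast at this
        omega
      exact Or.inr <| Set.mem_biUnion ((G.edist_le q).trans_lt (by exact_mod_cast hlt)) h.symm

theorem Walk.exists_mem_support_mem_graphBoundary_s2 {A : Set V} {x y : V} (w : G.Walk x y)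
    (hx : x ∈ A) (hy : y ∉ A) : ∃ a ∈ w.support, a ∈ graphBoundary G A := by
  obtain ⟨d, hd, hfst, hsnd⟩ := w.exists_boundary_dart A hx hy
  exact ⟨d.fst, w.dart_fst_mem_support_of_mem_darts hd, hfst, d.snd, hsnd, d.adj⟩

/-- A walk inside `C₁` leaving `C₂` would step from `∂C₂` to a vertex of `T \ C₂ = T \ C₁`. -/
theorem subset_of_inter_eq {C₁ C₂ T : Set V} (hconn : (G.induce C₁).Connected)
    (hne : (graphBoundary G C₁).Nonempty) (hsub : graphBoundary G C₁ ⊆ T)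
    (hT : ∀ u ∈ graphBoundary G C₂, ∀ v, G.Adj u v → v ∈ T) (heq : C₁ ∩ T = C₂ ∩ T) :
    C₁ ⊆ C₂ := by
  obtain ⟨b, hb⟩ := hne
  have hbC₂ : b ∈ C₂ := (heq ▸ ⟨hb.1, hsub hb⟩ : b ∈ C₂ ∩ T).1
  intro v hv
  by_contra hvC₂
  obtain ⟨w⟩ := hconn.preconnected ⟨b, hb.1⟩ ⟨v, hv⟩
  let w' := w.map (Embedding.induce C₁).toHom
  obtain ⟨d, hd, hfst, hsnd⟩ := w'.exists_boundary_dart C₂ hbC₂ hvC₂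
  have hsndC₁ : d.snd ∈ C₁ := by
    obtain ⟨u, -, hu⟩ :=
      List.mem_map.mp (Walk.support_map _ _ ▸ w'.dart_snd_mem_support_of_mem_darts hd)
    exact hu ▸ u.2
  exact hsnd (heq ▸ ⟨hsndC₁, hT _ ⟨hfst, _, hsnd, d.adj⟩ _ d.adj⟩ : d.snd ∈ C₂ ∩ T).1

theorem finite_of_forall_graphBoundary_subset [G.LocallyFinite] {S : Set V} (hS : S.Finite)
    {F : Set (Set V)} (hconn : ∀ C ∈ F, (G.induce C).Connected)
    (hne : ∀ C ∈ F, (graphBoundary G C).Nonempty) (hsub : ∀ C ∈ F, graphBoundary G C ⊆ S) :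
    F.Finite := by
  set T := S ∪ ⋃ u ∈ S, G.neighborSet u
  have hTfin : T.Finite := hS.union (hS.biUnion fun u _ ↦ (G.neighborSet u).toFinite)
  have hT : ∀ C ∈ F, ∀ u ∈ graphBoundary G C, ∀ v, G.Adj u v → v ∈ T :=
    fun C hC u hu v huv ↦ Or.inr (Set.mem_biUnion (hsub C hC hu) huv)
  have hinj : Set.InjOn (· ∩ T) F := fun C₁ h₁ C₂ h₂ heq ↦
    (subset_of_inter_eq (hconn C₁ h₁) (hne C₁ h₁) ((hsub C₁ h₁).trans Set.subset_union_left)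
      (hT C₂ h₂) heq).antisymm
    (subset_of_inter_eq (hconn C₂ h₂) (hne C₂ h₂) ((hsub C₂ h₂).trans Set.subset_union_left)
      (hT C₁ h₁) heq.symm)
  refine Set.Finite.of_finite_image (hTfin.finite_subsets.subset ?_) hinj
  rintro _ ⟨C, -, rfl⟩
  exact Set.inter_subset_right

theorem finite_setOf_mem_not_mem [G.LocallyFinite] (hconn : G.Connected)
    {E : Set (Set V)} (hcut : ∀ C ∈ E, IsCut G C) {M : ℕ}
    (hM : ∀ C ∈ E, ∀ x ∈ graphBoundary G C, ∀ y ∈ graphBoundary G C, G.dist x y ≤ M)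
    (x y : V) : {C | C ∈ E ∧ x ∈ C ∧ y ∉ C}.Finite := by
  obtain ⟨W⟩ := hconn x y
  refine finite_of_forall_graphBoundary_subset (S := ⋃ p ∈ W.support, G.ball p (M + 1))
    (W.support.finite_toSet.biUnion fun p _ ↦ finite_ball p (M + 1))
    (fun C hC ↦ (hcut C hC.1).2.1) (fun C hC ↦ (hcut C hC.1).2.2.2) ?_
  rintro C ⟨hCE, hxC, hyC⟩ b hb
  obtain ⟨a, ha, haC⟩ := W.exists_mem_support_mem_graphBoundary_s2 hxC hyC
  refine Set.mem_biUnion ha (mem_ball.mpr ?_)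
  rw [edist_comm, ← (hconn a b).coe_dist_eq_edist]
  exact_mod_cast Nat.lt_succ_of_le (hM C hCE a haC b hb)

end SimpleGraph

open SimpleGraph

theorem stmt2_general {V : Type*} (G : SimpleGraph V)
    (hconn : G.Connected) (hlf : G.LocallyFinite)
    (E : Set (Set V)) (hE : IsTreeSet G E)
    (M : ℕ)
    (hM : ∀ C ∈ E, ∀ x ∈ graphBoundary G C, ∀ y ∈ graphBoundary G C,
      G.dist x y ≤ M) :
    (∀ C ∈ E, ∀ x ∈ C, {C' | C' ∈ E ∧ x ∈ C' ∧ C' ⊆ C}.Finite) ∧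
      (∀ C ∈ E, ∀ D ∈ E, D ⊆ C → {C' | C' ∈ E ∧ D ⊆ C' ∧ C' ⊆ C}.Finite) := by
  have hcut := hE.2.1
  have hbelow : ∀ C ∈ E, ∀ x ∈ C, {C' | C' ∈ E ∧ x ∈ C' ∧ C' ⊆ C}.Finite := by
    intro C hC x _
    obtain ⟨-, -, y, hyC, -⟩ := (hcut C hC).2.2.2
    exact (finite_setOf_mem_not_mem hconn hcut hM x y).subset
      fun C' ⟨hC'E, hxC', hC'C⟩ ↦ ⟨hC'E, hxC', fun hy ↦ hyC (hC'C hy)⟩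
  refine ⟨hbelow, fun C hC D hD hDC ↦ ?_⟩
  obtain ⟨x, hx⟩ := (hcut D hD).1.nonempty
  exact (hbelow C hC x (hDC hx)).subset fun C' ⟨hC'E, hDC', hC'C⟩ ↦ ⟨hC'E, hDC' hx, hC'C⟩

/-- In an oriented tree set with uniformly bounded boundary diameters of a connected
locally finite graph: for `C ∈ E` and `x ∈ C`, the family of cuts of `E` between `x`
and `C` is finite; and for nested `D ⊆ C` in `E`, the family of cuts of `E` between
`D` and `C` is finite. -/
theorem stmt2 {V : Type*} [Infinite V] (G : SimpleGraph V)
    (hconn : G.Connected) (hlf : G.LocallyFinite)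
    (E : Set (Set V)) (hE : IsTreeSet G E)
    (M : ℕ)
    (hM : ∀ C ∈ E, ∀ x ∈ graphBoundary G C, ∀ y ∈ graphBoundary G C,
      G.dist x y ≤ M) :
    (∀ C ∈ E, ∀ x ∈ C, {C' | C' ∈ E ∧ x ∈ C' ∧ C' ⊆ C}.Finite) ∧
      (∀ C ∈ E, ∀ D ∈ E, D ⊆ C → {C' | C' ∈ E ∧ D ⊆ C' ∧ C' ⊆ C}.Finite) :=
  stmt2_general G hconn hlf E hE M hM
end

section
/- Let C = (V, Σ, P, S) be an un-ambiguous context-free grammar without chain rules, μ : Σ → (0,∞), and for T ∈ V let f_T(z) = Σ_{w ∈ L_T} μ(w_1)⋯μ(w_n) z^{|w|} be the generating function of the language L_T generated by T. Then each f_T converges absolutely for μ(a)|z| < 1/|Σ| (all a), and the functions satisfy the algebraic system f_T(z) = Pol_T(z; (f_U(z))_{U∈V}), where Pol_T(z;y) = Σ_{u : T ⊢ u} ζ(u) with ζ(a) = μ(a)z for a ∈ Σ and ζ(U) = y_U for U ∈ V, extended multiplicatively over words. -/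
noncomputable section
open Classical

/-- A rightmost derivation step for the production set `P`: replace the rightmost
variable occurrence (the part to its right consists of terminals only) using a
production of `P`. -/
def RStep {Vr A : Type*} (P : Set (Vr × List (Vr ⊕ A)))
    (v w : List (Vr ⊕ A)) : Prop :=
  ∃ (T : Vr) (u v₁ v₂ : List (Vr ⊕ A)), (T, u) ∈ P ∧
    (∀ s ∈ v₂, ∃ a : A, s = Sum.inr a) ∧
    v = v₁ ++ Sum.inl T :: v₂ ∧ w = v₁ ++ u ++ v₂

/-- Rightmost derivability. -/
def RDerives {Vr A : Type*} (P : Set (Vr × List (Vr ⊕ A)))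
    (v w : List (Vr ⊕ A)) : Prop :=
  Relation.ReflTransGen (RStep P) v w

/-- The language `L_T` generated by the variable `T`. -/
def Lang {Vr A : Type*} (P : Set (Vr × List (Vr ⊕ A))) (T : Vr) :
    Set (List A) :=
  {w | RDerives P [Sum.inl T] (w.map Sum.inr)}

/-- The grammar is un-ambiguous: every word generated from a variable has a
unique rightmost derivation. -/
def UnAmbiguous {Vr A : Type*} (P : Set (Vr × List (Vr ⊕ A))) : Prop :=
  ∀ (T : Vr) (w : List A) (l₁ l₂ : List (List (Vr ⊕ A))),
    List.Chain' (RStep P) ([Sum.inl T] :: l₁) →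
    ([Sum.inl T] :: l₁).getLast (by simp) = w.map Sum.inr →
    List.Chain' (RStep P) ([Sum.inl T] :: l₂) →
    ([Sum.inl T] :: l₂).getLast (by simp) = w.map Sum.inr →
    l₁ = l₂

/-- The weight of a word `w`: `μ(w₁)⋯μ(w_n) z^{|w|}`. -/
def wordWeight {A : Type*} (μ : A → ℝ) (z : ℝ) (w : List A) : ℝ :=
  (w.map μ).prod * z ^ w.length

/-- The generating function `f_T(z) = Σ_{w ∈ L_T} μ(w₁)⋯μ(w_n) z^{|w|}`. -/
def fgen {Vr A : Type*} (P : Set (Vr × List (Vr ⊕ A))) (μ : A → ℝ)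
    (T : Vr) (z : ℝ) : ℝ :=
  ∑' w : List A, Set.indicator (Lang P T) (wordWeight μ z) w


/-!
Unambiguity makes the map sending a complete rightmost derivation from `[T]` to the word it
produces injective, with image `L_T`; so `f_T` is the sum of the word weights over all
derivations from `[T]`. These sums converge absolutely, being dominated by
`∑_w ∏ μ(wᵢ)|z| = ∑_n (∑_a μ(a)|z|)^n < ∞`. The derivations from `[T]` are in bijection with
pairs (production `T → u`, derivation from `u`), and the derivations from `u₁ ++ u₂` with pairs of
derivations from `u₁` and from `u₂`. Since word weights are multiplicative, summing over the first
bijection and then taking Cauchy products along the second yields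
`f_T = ∑_{T → u} ∏_{s ∈ u} ζ(s)`.
-/

section

variable {Vr A : Type*} {P : Set (Vr × List (Vr ⊕ A))}

theorem RStep.append_left (x : List (Vr ⊕ A)) {v w : List (Vr ⊕ A)} (h : RStep P v w) :
    RStep P (x ++ v) (x ++ w) := by
  obtain ⟨T, u, v₁, v₂, hTu, hv₂, rfl, rfl⟩ := h
  exact ⟨T, u, x ++ v₁, v₂, hTu, hv₂, by simp, by simp⟩

theorem RStep.append_terminals (y : List A) {v w : List (Vr ⊕ A)} (h : RStep P v w) :
    RStep P (v ++ y.map Sum.inr) (w ++ y.map Sum.inr) := by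
  obtain ⟨T, u, v₁, v₂, hTu, hv₂, rfl, rfl⟩ := h
  refine ⟨T, u, v₁, v₂ ++ y.map Sum.inr, hTu, ?_, by simp, by simp⟩
  simp only [List.mem_append, List.mem_map]
  rintro s (hs | ⟨a, -, rfl⟩)
  exacts [hv₂ s hs, ⟨a, rfl⟩]

theorem not_rStep_terminals (y : List A) (v : List (Vr ⊕ A)) : ¬ RStep P (y.map Sum.inr) v := by
  rintro ⟨T, u, v₁, v₂, -, -, hy, -⟩
  have : (Sum.inl T : Vr ⊕ A) ∈ y.map Sum.inr := by simp [hy]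
  simp at this

theorem exists_eq_map_inr {u : List (Vr ⊕ A)} (hu : ∀ s ∈ u, ∃ a : A, s = Sum.inr a) :
    ∃ y : List A, u = y.map Sum.inr := by
  induction u with
  | nil => exact ⟨[], rfl⟩
  | cons s u ih =>
    obtain ⟨a, rfl⟩ := hu s List.mem_cons_self
    obtain ⟨y, rfl⟩ := ih fun s hs => hu s (List.mem_cons_of_mem _ hs)
    exact ⟨a :: y, rfl⟩

theorem RStep.append_cases {u₁ u₂ x : List (Vr ⊕ A)} (h : RStep P (u₁ ++ u₂) x) :
    (∃ x₂, RStep P u₂ x₂ ∧ x = u₁ ++ x₂) ∨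
      (∃ (y : List A) (x₁ : List (Vr ⊕ A)), u₂ = y.map Sum.inr ∧ RStep P u₁ x₁ ∧ x = x₁ ++ u₂) := by
  obtain ⟨T, u, v₁, v₂, hTu, hv₂, hsplit, rfl⟩ := h
  rcases List.append_eq_append_iff.1 hsplit with ⟨c, rfl, rfl⟩ | ⟨c, rfl, hc⟩
  · exact .inl ⟨c ++ u ++ v₂, ⟨T, u, c, v₂, hTu, hv₂, rfl, rfl⟩, by simp⟩
  · rcases List.cons_eq_append_iff.1 hc with ⟨rfl, rfl⟩ | ⟨c', rfl, rfl⟩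
    · exact .inl ⟨u ++ v₂, ⟨T, u, [], v₂, hTu, hv₂, rfl, rfl⟩, by simp⟩
    · obtain ⟨y, hy⟩ := exists_eq_map_inr fun s hs => hv₂ s (List.mem_append_right _ hs)
      refine .inr ⟨y, v₁ ++ u ++ c', hy, ⟨T, u, v₁, c', hTu, ?_, rfl, rfl⟩, by simp⟩
      exact fun s hs => hv₂ s (List.mem_append_left _ hs)

theorem rStep_singleton_inl_iff {T : Vr} {x : List (Vr ⊕ A)} :
    RStep P [Sum.inl T] x ↔ (T, x) ∈ P := by
  constructor
  · rintro ⟨T', u, v₁, v₂, hTu, -, hT, rfl⟩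
    rcases v₁ with _ | ⟨s, v₁⟩
    · simp_all
    · simpa using congrArg List.length hT
  · intro h
    exact ⟨T, x, [], [], h, by simp, rfl, by simp⟩

/-- A complete rightmost derivation `u ⇒ l₁ ⇒ ⋯ ⇒ lₙ = w`, recorded by the sentential forms
`l = [l₁, …, lₙ]` that follow `u`. -/
def IsRDerivation (P : Set (Vr × List (Vr ⊕ A))) (u : List (Vr ⊕ A))
    (l : List (List (Vr ⊕ A))) (w : List A) : Prop :=
  List.IsChain (RStep P) (u :: l) ∧ (u :: l).getLast (List.cons_ne_nil _ _) = w.map Sum.inr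

namespace IsRDerivation

variable {u x : List (Vr ⊕ A)} {l : List (List (Vr ⊕ A))} {w : List A}

theorem nil_iff : IsRDerivation P u [] w ↔ u = w.map Sum.inr := by
  simp [IsRDerivation]

theorem cons_iff : IsRDerivation P u (x :: l) w ↔ RStep P u x ∧ IsRDerivation P x l w := by
  simp [IsRDerivation, List.isChain_cons_cons, and_assoc]

theorem word_unique {w' : List A} (h : IsRDerivation P u l w) (h' : IsRDerivation P u l w') :
    w = w' :=
  List.map_injective_iff.2 Sum.inr_injective (h.2.symm.trans h'.2)

theorem terminals_iff {y : List A} : IsRDerivation P (y.map Sum.inr) l w ↔ l = [] ∧ w = y := by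
  constructor
  · intro h
    cases l with
    | nil => exact ⟨rfl, List.map_injective_iff.2 Sum.inr_injective (nil_iff.1 h).symm⟩
    | cons x l => exact absurd (cons_iff.1 h).1 (not_rStep_terminals y x)
  · rintro ⟨rfl, rfl⟩
    exact nil_iff.2 rfl

theorem singleton_inl_iff {T : Vr} :
    IsRDerivation P [Sum.inl T] l w ↔
      ∃ u l', (T, u) ∈ P ∧ l = u :: l' ∧ IsRDerivation P u l' w := by
  cases l with
  | nil => simp [nil_iff, eq_comm (a := [Sum.inl T]), List.map_eq_singleton_iff]
  | cons x l => simp [cons_iff, rStep_singleton_inl_iff]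

/-- The factor `u₂` is derived first, as rightmost derivations demand. -/
theorem append {u₁ u₂ : List (Vr ⊕ A)} {l₁ l₂ : List (List (Vr ⊕ A))} {w₁ w₂ : List A}
    (h₁ : IsRDerivation P u₁ l₁ w₁) (h₂ : IsRDerivation P u₂ l₂ w₂) :
    IsRDerivation P (u₁ ++ u₂) (l₂.map (u₁ ++ ·) ++ l₁.map (· ++ w₂.map Sum.inr)) (w₁ ++ w₂) := by
  induction l₂ generalizing u₂ with
  | nil =>
    obtain rfl := nil_iff.1 h₂
    simp only [List.map_nil, List.nil_append]
    induction l₁ generalizing u₁ with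
    | nil => exact nil_iff.2 (by simp [nil_iff.1 h₁])
    | cons x l₁ ih =>
      obtain ⟨hstep, h₁⟩ := cons_iff.1 h₁
      exact cons_iff.2 ⟨hstep.append_terminals w₂, ih h₁⟩
  | cons x l₂ ih =>
    obtain ⟨hstep, h₂⟩ := cons_iff.1 h₂
    exact cons_iff.2 ⟨hstep.append_left u₁, ih h₂⟩

theorem exists_append_eq {u₁ u₂ : List (Vr ⊕ A)} (h : IsRDerivation P (u₁ ++ u₂) l w) :
    ∃ w₁ w₂ l₁ l₂, w = w₁ ++ w₂ ∧ IsRDerivation P u₁ l₁ w₁ ∧ IsRDerivation P u₂ l₂ w₂ ∧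
      l = l₂.map (u₁ ++ ·) ++ l₁.map (· ++ w₂.map Sum.inr) := by
  induction l generalizing u₁ u₂ with
  | nil =>
    obtain ⟨y₁, y₂, rfl, rfl, rfl⟩ := List.map_eq_append_iff.1 (nil_iff.1 h).symm
    exact ⟨y₁, y₂, [], [], rfl, nil_iff.2 rfl, nil_iff.2 rfl, rfl⟩
  | cons x l ih =>
    obtain ⟨hstep, hrest⟩ := cons_iff.1 h
    rcases hstep.append_cases with ⟨x₂, hstep₂, rfl⟩ | ⟨y, x₁, rfl, hstep₁, rfl⟩
    · obtain ⟨w₁, w₂, l₁, l₂, rfl, h₁, h₂, rfl⟩ := ih hrest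
      exact ⟨w₁, w₂, l₁, x₂ :: l₂, rfl, h₁, cons_iff.2 ⟨hstep₂, h₂⟩, rfl⟩
    · obtain ⟨w₁, w₂, l₁, l₂, rfl, h₁, h₂, rfl⟩ := ih hrest
      obtain ⟨rfl, rfl⟩ := terminals_iff.1 h₂
      exact ⟨w₁, w₂, x₁ :: l₁, [], rfl, cons_iff.2 ⟨hstep₁, h₁⟩, h₂, rfl⟩

theorem append_injective {u₁ u₂ : List (Vr ⊕ A)} {l₁ l₂ l₁' l₂' : List (List (Vr ⊕ A))}
    {w₁ w₂ w₁' w₂' : List A}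
    (h₁ : IsRDerivation P u₁ l₁ w₁) (h₂ : IsRDerivation P u₂ l₂ w₂)
    (h₁' : IsRDerivation P u₁ l₁' w₁') (h₂' : IsRDerivation P u₂ l₂' w₂')
    (hl : l₂.map (u₁ ++ ·) ++ l₁.map (· ++ w₂.map Sum.inr) =
      l₂'.map (u₁ ++ ·) ++ l₁'.map (· ++ w₂'.map Sum.inr)) :
    w₁ = w₁' ∧ w₂ = w₂' ∧ l₁ = l₁' ∧ l₂ = l₂' := by
  induction l₂ generalizing u₂ l₂' with
  | nil =>
    obtain rfl := nil_iff.1 h₂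
    obtain ⟨rfl, rfl⟩ := terminals_iff.1 h₂'
    obtain rfl : l₁ = l₁' :=
      List.map_injective_iff.2 (List.append_left_injective _) (by simpa using hl)
    exact ⟨h₁.word_unique h₁', rfl, rfl, rfl⟩
  | cons x l₂ ih =>
    obtain ⟨hstep, h₂⟩ := cons_iff.1 h₂
    cases l₂' with
    | nil => exact absurd hstep (by rw [nil_iff.1 h₂']; exact not_rStep_terminals _ _)
    | cons x' l₂' =>
      obtain ⟨-, h₂'⟩ := cons_iff.1 h₂'
      simp only [List.map_cons, List.cons_append, List.cons.injEq, List.append_cancel_left_eq] at hl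
      obtain ⟨rfl, hl⟩ := hl
      obtain ⟨e₁, e₂, e₃, rfl⟩ := ih h₂ h₂' hl
      exact ⟨e₁, e₂, e₃, rfl⟩

end IsRDerivation

@[ext]
structure RDerivation (P : Set (Vr × List (Vr ⊕ A))) (u : List (Vr ⊕ A)) where
  word : List A
  forms : List (List (Vr ⊕ A))
  isRDerivation : IsRDerivation P u forms word

namespace RDerivation

instance (y : List A) : Unique (RDerivation P (y.map Sum.inr)) where
  default := ⟨y, [], IsRDerivation.nil_iff.2 rfl⟩
  uniq d := by
    obtain ⟨hforms, hword⟩ := IsRDerivation.terminals_iff.1 d.isRDerivation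
    ext <;> simp [hforms, hword]

instance (a : A) : Unique (RDerivation P [Sum.inr a]) :=
  inferInstanceAs (Unique (RDerivation P ([a].map Sum.inr)))

instance : Unique (RDerivation P []) :=
  inferInstanceAs (Unique (RDerivation P (([] : List A).map Sum.inr)))

def append {u₁ u₂ : List (Vr ⊕ A)} (d : RDerivation P u₁ × RDerivation P u₂) :
    RDerivation P (u₁ ++ u₂) where
  word := d.1.word ++ d.2.word
  forms := d.2.forms.map (u₁ ++ ·) ++ d.1.forms.map (· ++ d.2.word.map Sum.inr)
  isRDerivation := d.1.isRDerivation.append d.2.isRDerivation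

theorem append_bijective (u₁ u₂ : List (Vr ⊕ A)) :
    Function.Bijective (append : RDerivation P u₁ × RDerivation P u₂ → _) := by
  constructor
  · rintro ⟨⟨w₁, l₁, h₁⟩, ⟨w₂, l₂, h₂⟩⟩ ⟨⟨w₁', l₁', h₁'⟩, ⟨w₂', l₂', h₂'⟩⟩ h
    obtain ⟨rfl, rfl, rfl, rfl⟩ :=
      IsRDerivation.append_injective h₁ h₂ h₁' h₂' (congrArg RDerivation.forms h)
    rfl
  · rintro ⟨w, l, h⟩
    obtain ⟨w₁, w₂, l₁, l₂, rfl, h₁, h₂, rfl⟩ := h.exists_append_eq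
    exact ⟨(⟨w₁, l₁, h₁⟩, ⟨w₂, l₂, h₂⟩), rfl⟩

def appendEquiv (u₁ u₂ : List (Vr ⊕ A)) :
    RDerivation P u₁ × RDerivation P u₂ ≃ RDerivation P (u₁ ++ u₂) :=
  Equiv.ofBijective _ (append_bijective u₁ u₂)

/-- Prefix a derivation of the right-hand side of a production `T → u` by the step `[T] ⇒ u`. -/
def ofProduction {T : Vr} (d : Σ p : {p : Vr × List (Vr ⊕ A) // p ∈ P ∧ p.1 = T},
    RDerivation P p.1.2) : RDerivation P [Sum.inl T] where
  word := d.2.word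
  forms := d.1.1.2 :: d.2.forms
  isRDerivation := by
    obtain ⟨⟨⟨T, u⟩, hTu, rfl⟩, d⟩ := d
    exact IsRDerivation.singleton_inl_iff.2 ⟨u, d.forms, hTu, rfl, d.isRDerivation⟩

theorem ofProduction_bijective (T : Vr) :
    Function.Bijective (ofProduction : (Σ p : {p : Vr × List (Vr ⊕ A) // p ∈ P ∧ p.1 = T},
      RDerivation P p.1.2) → RDerivation P [Sum.inl T]) := by
  constructor
  · rintro ⟨⟨⟨_, u⟩, hTu, rfl⟩, ⟨w, l, h⟩⟩ ⟨⟨⟨_, u'⟩, hTu', hT⟩, ⟨w', l', h'⟩⟩ he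
    simp only at hT
    subst hT
    simp only [ofProduction, RDerivation.mk.injEq, List.cons.injEq] at he
    obtain ⟨rfl, rfl, rfl⟩ := he
    rfl
  · rintro ⟨w, l, h⟩
    obtain ⟨u, l', hTu, rfl, h'⟩ := IsRDerivation.singleton_inl_iff.1 h
    exact ⟨⟨⟨(T, u), hTu, rfl⟩, ⟨w, l', h'⟩⟩, rfl⟩

def productionEquiv (T : Vr) :
    (Σ p : {p : Vr × List (Vr ⊕ A) // p ∈ P ∧ p.1 = T}, RDerivation P p.1.2) ≃
      RDerivation P [Sum.inl T] :=
  Equiv.ofBijective _ (ofProduction_bijective T)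

theorem exists_word_eq_iff {u : List (Vr ⊕ A)} {w : List A} :
    (∃ d : RDerivation P u, d.word = w) ↔ RDerives P u (w.map Sum.inr) := by
  constructor
  · rintro ⟨⟨w, l, hchain, hlast⟩, rfl⟩
    exact List.relationReflTransGen_of_exists_isChain_cons l hchain hlast
  · intro h
    obtain ⟨l, hchain, hlast⟩ := List.exists_isChain_cons_of_relationReflTransGen h
    exact ⟨⟨w, l, hchain, hlast⟩, rfl⟩

theorem range_word (T : Vr) :
    Set.range (word : RDerivation P [Sum.inl T] → List A) = Lang P T :=
  Set.ext fun _ => exists_word_eq_iff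

theorem word_injective (hP : UnAmbiguous P) (T : Vr) :
    Function.Injective (word : RDerivation P [Sum.inl T] → List A) := by
  rintro ⟨w, l, h⟩ ⟨w', l', h'⟩ (rfl : w = w')
  obtain rfl := hP T w l l' h.1 h.2 h'.1 h'.2
  rfl

end RDerivation

theorem summable_prod_map_of_sum_lt_one {ι : Type*} [Fintype ι] {g : ι → ℝ} (hg : ∀ i, 0 ≤ g i)
    (hsum : ∑ i, g i < 1) : Summable fun w : List ι => (w.map g).prod := by
  have hprod_nonneg (w : List ι) : 0 ≤ (w.map g).prod :=
    List.prod_nonneg (by simpa using fun i _ => hg i)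
  have hlength (n : ℕ) : ∑' v : Fin n → ι, ((List.ofFn v).map g).prod = (∑ i, g i) ^ n := by
    rw [tsum_fintype, Fintype.sum_pow]
    simp [List.map_ofFn, List.prod_ofFn]
  have hsigma : Summable fun v : Σ n, Fin n → ι => ((List.ofFn v.2).map g).prod := by
    refine (summable_sigma_of_nonneg fun v => hprod_nonneg _).2 ⟨fun n => .of_finite, ?_⟩
    simpa only [hlength] using summable_geometric_of_lt_one (Finset.sum_nonneg fun i _ => hg i) hsum
  exact List.equivSigmaTuple.symm.summable_iff.1 hsigma

theorem wordWeight_nil (μ : A → ℝ) (z : ℝ) : wordWeight μ z [] = 1 := by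
  simp [wordWeight]

theorem wordWeight_singleton (μ : A → ℝ) (z : ℝ) (a : A) : wordWeight μ z [a] = μ a * z := by
  simp [wordWeight]

theorem wordWeight_append (μ : A → ℝ) (z : ℝ) (w₁ w₂ : List A) :
    wordWeight μ z (w₁ ++ w₂) = wordWeight μ z w₁ * wordWeight μ z w₂ := by
  simp only [wordWeight, List.map_append, List.prod_append, List.length_append, pow_add]
  ring

theorem norm_wordWeight (μ : A → ℝ) (z : ℝ) (w : List A) :
    ‖wordWeight μ z w‖ = (w.map fun a => ‖μ a‖ * ‖z‖).prod := by
  rw [wordWeight, norm_mul, List.norm_prod, norm_pow, List.prod_map_mul, List.map_map,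
    List.map_const', List.prod_replicate]
  rfl

theorem summable_norm_wordWeight [Fintype A] {μ : A → ℝ} {z : ℝ} (h : ∑ a, ‖μ a‖ * ‖z‖ < 1) :
    Summable fun w => ‖wordWeight μ z w‖ := by
  simpa only [norm_wordWeight] using
    summable_prod_map_of_sum_lt_one (fun a => by positivity) h

namespace RDerivation

variable {μ : A → ℝ} {z : ℝ}

theorem summable_norm_wordWeight (hP : UnAmbiguous P)
    (hμz : Summable fun w => ‖wordWeight μ z w‖) (u : List (Vr ⊕ A)) :
    Summable fun d : RDerivation P u => ‖wordWeight μ z d.word‖ := by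
  induction u with
  | nil => exact .of_finite
  | cons s u ih =>
    have hs : Summable fun d : RDerivation P [s] => ‖wordWeight μ z d.word‖ := by
      cases s with
      | inl T => exact hμz.comp_injective (word_injective hP T)
      | inr a => exact .of_finite
    refine (appendEquiv [s] u).summable_iff.1 ((hs.mul_norm ih).congr fun d => ?_)
    simp [appendEquiv, append, wordWeight_append]

theorem tsum_wordWeight_append {u₁ u₂ : List (Vr ⊕ A)}
    (h₁ : Summable fun d : RDerivation P u₁ => ‖wordWeight μ z d.word‖)
    (h₂ : Summable fun d : RDerivation P u₂ => ‖wordWeight μ z d.word‖) :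
    ∑' d : RDerivation P (u₁ ++ u₂), wordWeight μ z d.word =
      (∑' d : RDerivation P u₁, wordWeight μ z d.word) *
        ∑' d : RDerivation P u₂, wordWeight μ z d.word := by
  rw [tsum_mul_tsum_of_summable_norm h₁ h₂, ← (appendEquiv u₁ u₂).tsum_eq]
  simp [appendEquiv, append, wordWeight_append]

theorem tsum_wordWeight_eq_prod (hP : UnAmbiguous P)
    (hμz : Summable fun w => ‖wordWeight μ z w‖) (u : List (Vr ⊕ A)) :
    ∑' d : RDerivation P u, wordWeight μ z d.word =
      (u.map fun s => ∑' d : RDerivation P [s], wordWeight μ z d.word).prod := by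
  induction u with
  | nil =>
    rw [(hasSum_unique _).tsum_eq]
    exact wordWeight_nil μ z
  | cons s u ih =>
    rw [List.map_cons, List.prod_cons, ← ih, ← tsum_wordWeight_append
      (summable_norm_wordWeight hP hμz [s]) (summable_norm_wordWeight hP hμz u)]
    rfl

theorem fgen_eq_tsum (hP : UnAmbiguous P) (T : Vr) :
    fgen P μ T z = ∑' d : RDerivation P [Sum.inl T], wordWeight μ z d.word := by
  rw [fgen, ← (word_injective hP T).tsum_eq (range_word T ▸ Set.support_indicator_subset)]
  refine tsum_congr fun d => Set.indicator_of_mem ?_ _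
  exact range_word T ▸ Set.mem_range_self d

theorem tsum_wordWeight_singleton (hP : UnAmbiguous P) (s : Vr ⊕ A) :
    ∑' d : RDerivation P [s], wordWeight μ z d.word =
      Sum.elim (fun U => fgen P μ U z) (fun a => μ a * z) s := by
  cases s with
  | inl T => exact (fgen_eq_tsum hP T).symm
  | inr a =>
    rw [(hasSum_unique _).tsum_eq]
    exact wordWeight_singleton μ z a

end RDerivation

theorem fgen_eq_tsum_productions {μ : A → ℝ} {z : ℝ}
    (hP : UnAmbiguous P) (hμz : Summable fun w => ‖wordWeight μ z w‖) (T : Vr) :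
    fgen P μ T z = ∑' p : {p : Vr × List (Vr ⊕ A) // p ∈ P ∧ p.1 = T},
      (p.1.2.map (Sum.elim (fun U => fgen P μ U z) (fun a => μ a * z))).prod := by
  let e := RDerivation.productionEquiv (P := P) T
  have hsummable : Summable fun d : Σ p : {p : Vr × List (Vr ⊕ A) // p ∈ P ∧ p.1 = T},
      RDerivation P p.1.2 => wordWeight μ z (e d).word :=
    e.summable_iff.2 (RDerivation.summable_norm_wordWeight hP hμz _).of_norm
  rw [RDerivation.fgen_eq_tsum hP, ← e.tsum_eq, hsummable.tsum_sigma]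
  refine tsum_congr fun p => ?_
  rw [← List.map_congr_left fun s _ => RDerivation.tsum_wordWeight_singleton hP s,
    ← RDerivation.tsum_wordWeight_eq_prod hP hμz]
  rfl

end

theorem stmt13_general {Vr A : Type*} [Fintype A] [Nonempty A]
    (P : Set (Vr × List (Vr ⊕ A))) (hPfin : P.Finite)
    (hunamb : UnAmbiguous P)
    (μ : A → ℝ) (hμpos : ∀ a, 0 < μ a)
    (z : ℝ) (hz : ∀ a : A, μ a * |z| < 1 / (Fintype.card A)) :
    (∀ T : Vr, Summable (fun w : List A =>
        Set.indicator (Lang P T) (wordWeight μ z) w)) ∧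
    (∀ T : Vr, fgen P μ T z =
      ∑ p ∈ hPfin.toFinset.filter (fun p => p.1 = T),
        (p.2.map (Sum.elim (fun U => fgen P μ U z)
          (fun a => μ a * z))).prod) := by
  have hμz : ∑ a, ‖μ a‖ * ‖z‖ < 1 := calc
    ∑ a, ‖μ a‖ * ‖z‖ = ∑ a, μ a * |z| := by simp [abs_of_pos (hμpos _)]
    _ < ∑ _a : A, 1 / (Fintype.card A : ℝ) :=
      Finset.sum_lt_sum_of_nonempty Finset.univ_nonempty fun a _ => hz a
    _ = 1 := by simp
  have hsummable := summable_norm_wordWeight hμz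
  refine ⟨fun T => hsummable.of_norm.indicator _, fun T => ?_⟩
  rw [fgen_eq_tsum_productions hunamb hsummable, ← Finset.tsum_subtype]
  exact (Equiv.subtypeEquivRight fun p => by simp [and_comm]).tsum_eq _ |>.symm

/-- For an un-ambiguous context-free grammar without chain rules, the generating
functions `f_T` converge absolutely for `μ(a)|z| < 1/|Σ|` and satisfy the
Chomsky–Schützenberger algebraic system
`f_T(z) = Pol_T(z; (f_U(z))_U) = Σ_{T ⊢ u} ζ(u)`, where `ζ(a) = μ(a) z` for
terminals and `ζ(U) = f_U(z)` for variables, extended multiplicatively. -/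
theorem stmt13 {Vr A : Type*} [Fintype Vr] [Fintype A] [Nonempty A]
    (P : Set (Vr × List (Vr ⊕ A))) (hPfin : P.Finite) (S : Vr)
    (hunamb : UnAmbiguous P)
    (hnochain : ∀ p ∈ P, ¬ ∃ U : Vr, p.2 = [Sum.inl U])
    (μ : A → ℝ) (hμpos : ∀ a, 0 < μ a)
    (z : ℝ) (hz : ∀ a : A, μ a * |z| < 1 / (Fintype.card A)) :
    (∀ T : Vr, Summable (fun w : List A =>
        Set.indicator (Lang P T) (wordWeight μ z) w)) ∧
    (∀ T : Vr, fgen P μ T z =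
      ∑ p ∈ hPfin.toFinset.filter (fun p => p.1 = T),
        (p.2.map (Sum.elim (fun U => fgen P μ U z)
          (fun a => μ a * z))).prod) :=
  stmt13_general P hPfin hunamb μ hμpos z hz
end
end

section
/- Let G be a group, H ≤ G with [G:H] < ∞, K ≤ H, and suppose the Schreier graph X(G,K,ψ') (for a symmetric semigroup presentation ψ' of G) and X(H,K,ψ) (for one of H) have graph metrics d' and d respectively on their vertex sets (right K-cosets). Then there are integers M_1, M_2 ≥ 1 and N ≥ 0, depending only on (H,ψ) and (G,ψ'), such that every vertex of X(G,K,ψ') is within d'-distance N of a vertex of X(H,K,ψ), and for all vertices y_1,y_2 of X(H,K,ψ): d'(y_1,y_2)/M_1 ≤ d(y_1,y_2) ≤ M_2 d'(y_1,y_2). -/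
/-!
Choose a retraction `f : G → H` fixing `H` with `g⁻¹ * f g` in a finite set (right coset
representatives). Every vertex `Kg` is then within bounded `d'`-distance of `K (f g)`.
Along a `ψ'`-path `g, gψ'(a₁), …` the values of `f` at consecutive vertices differ by one of
finitely many elements of `H`, each a `ψ`-word of bounded length; telescoping gives
`d ≤ M₂ d'`. Conversely each `ψ(a)` is a `ψ'`-word of bounded length, whence `d' ≤ M₁ d`.
-/

noncomputable section

/-- The Schreier graph distance between the cosets `Kg₁` and `Kg₂` for the
semigroup presentation `ψ`: least length of a word `w` over the alphabet with
`Kg₁ψ(w) = Kg₂`. -/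
def schreierDist {G : Type*} [Group G] (K : Subgroup G) {A : Type*}
    (ψ : A → G) (g₁ g₂ : G) : ℕ :=
  sInf {n : ℕ | ∃ w : List A, w.length = n ∧ g₁ * (w.map ψ).prod * g₂⁻¹ ∈ K}

section SchreierDist

variable {G : Type*} [Group G] {A B : Type*}

theorem schreierDist_le_length {K : Subgroup G} {ψ : A → G} {g₁ g₂ : G} (w : List A)
    (hw : g₁ * (w.map ψ).prod * g₂⁻¹ ∈ K) : schreierDist K ψ g₁ g₂ ≤ w.length :=
  Nat.sInf_le ⟨w, rfl, hw⟩

theorem exists_length_eq_schreierDist {K : Subgroup G} {ψ : A → G} {g₁ g₂ : G}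
    (h : ∃ w : List A, g₁ * (w.map ψ).prod * g₂⁻¹ ∈ K) :
    ∃ w : List A, w.length = schreierDist K ψ g₁ g₂ ∧
      g₁ * (w.map ψ).prod * g₂⁻¹ ∈ K := by
  obtain ⟨w, hw⟩ := h
  exact Nat.sInf_mem
    (s := {n | ∃ w : List A, w.length = n ∧ g₁ * (w.map ψ).prod * g₂⁻¹ ∈ K})
    ⟨_, w, rfl, hw⟩

theorem exists_word_length_le_of_finite {φ : A → G} {S : Set G} (hS : S.Finite)
    (hgen : ∀ s ∈ S, ∃ u : List A, (u.map φ).prod = s) :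
    ∃ C : ℕ, ∀ s ∈ S, ∃ u : List A, (u.map φ).prod = s ∧ u.length ≤ C := by
  have : Finite S := hS.to_subtype
  choose u hu using fun s : S => hgen s s.2
  obtain ⟨C, hC⟩ := Finite.bddAbove_range fun s : S => (u s).length
  exact ⟨C, fun s hs => ⟨u ⟨s, hs⟩, hu _, hC ⟨⟨s, hs⟩, rfl⟩⟩⟩

theorem exists_word_telescope {φ : A → G} {ψ : B → G} (f : G → G) {C : ℕ}
    (hf : ∀ g b, ∃ u : List A, (u.map φ).prod = (f g)⁻¹ * f (g * ψ b) ∧ u.length ≤ C)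
    (w : List B) (g : G) :
    ∃ u : List A, (u.map φ).prod = (f g)⁻¹ * f (g * (w.map ψ).prod) ∧
      u.length ≤ C * w.length := by
  induction w generalizing g with
  | nil => exact ⟨[], by simp, by simp⟩
  | cons b w ih =>
    obtain ⟨u, hu, hlen⟩ := hf g b
    obtain ⟨v, hv, hvlen⟩ := ih (g * ψ b)
    refine ⟨u ++ v, ?_, ?_⟩
    · simp only [List.map_append, List.prod_append, hu, hv, List.map_cons, List.prod_cons,
        mul_assoc, mul_inv_cancel_left]
    · simp only [List.length_append, List.length_cons, Nat.mul_succ]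
      omega

theorem schreierDist_le_mul_of_telescope {K : Subgroup G} {φ : A → G} {ψ : B → G}
    (f : G → G) {C : ℕ}
    (hf : ∀ g b, ∃ u : List A, (u.map φ).prod = (f g)⁻¹ * f (g * ψ b) ∧ u.length ≤ C)
    {g₁ g₂ : G} (hg₁ : f g₁ = g₁) (hg₂ : ∀ g, g * g₂⁻¹ ∈ K → f g = g)
    (hreach : ∃ w : List B, (w.map ψ).prod = g₁⁻¹ * g₂) :
    schreierDist K φ g₁ g₂ ≤ C * schreierDist K ψ g₁ g₂ := by
  obtain ⟨w, hwlen, hw⟩ := exists_length_eq_schreierDist (K := K) <| by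
    obtain ⟨w, hw⟩ := hreach
    exact ⟨w, by rw [hw, mul_inv_cancel_left, mul_inv_cancel]; exact K.one_mem⟩
  obtain ⟨u, hu, hulen⟩ := exists_word_telescope f hf w g₁
  rw [hg₁, hg₂ _ hw, inv_mul_cancel_left] at hu
  calc schreierDist K φ g₁ g₂ ≤ u.length := schreierDist_le_length u (by rwa [hu])
    _ ≤ C * schreierDist K ψ g₁ g₂ := hwlen ▸ hulen

theorem finite_range_telescope_steps {f : G → G} (hf : (Set.range fun g => g⁻¹ * f g).Finite)
    (ψ : B → G) [Finite B] :
    (Set.range fun p : G × B => (f p.1)⁻¹ * f (p.1 * ψ p.2)).Finite := by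
  set D := Set.range fun g => g⁻¹ * f g
  have : Finite D := hf.to_subtype
  refine (Set.finite_range fun x : D × B × D => x.1.1⁻¹ * ψ x.2.1 * x.2.2.1).subset ?_
  rintro _ ⟨⟨g, b⟩, rfl⟩
  exact ⟨(⟨_, g, rfl⟩, b, ⟨_, g * ψ b, rfl⟩), by group⟩

theorem Subgroup.exists_retraction_of_finiteIndex (H : Subgroup G) [H.FiniteIndex] :
    ∃ f : G → G, (∀ g, f g ∈ H) ∧ (∀ h ∈ H, f h = h) ∧
      (Set.range fun g => g⁻¹ * f g).Finite := by
  classical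
  refine ⟨fun g => if g ∈ H then g else g * (QuotientGroup.mk g⁻¹ : G ⧸ H).out,
    fun g => ?_, fun h hh => if_pos hh,
    ((Set.finite_range fun q : G ⧸ H => q.out).insert 1).subset ?_⟩
  · dsimp only
    split_ifs with hg
    · exact hg
    · have hout := QuotientGroup.out_eq' (QuotientGroup.mk g⁻¹ : G ⧸ H)
      simpa using H.inv_mem (QuotientGroup.eq.mp hout)
  · rintro _ ⟨g, rfl⟩
    by_cases hg : g ∈ H <;> simp [hg]

end SchreierDist

theorem stmt14_general {G : Type*} [Group G] (H : Subgroup G) [H.FiniteIndex]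
    (K : Subgroup G) (hKH : K ≤ H)
    {A A' : Type*} [Fintype A] [Fintype A']
    (ψ : A → G) (ψ' : A' → G)
    (hψgen : ∀ h ∈ H, ∃ w : List A, (w.map ψ).prod = h)
    (hψ'gen : ∀ g : G, ∃ w : List A', (w.map ψ').prod = g) :
    ∃ M₁ M₂ N : ℕ, 1 ≤ M₁ ∧ 1 ≤ M₂ ∧
      (∀ g : G, ∃ h ∈ H, schreierDist K ψ' g h ≤ N) ∧
      ∀ h₁ ∈ H, ∀ h₂ ∈ H,
        schreierDist K ψ' h₁ h₂ ≤ M₁ * schreierDist K ψ h₁ h₂ ∧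
        schreierDist K ψ h₁ h₂ ≤ M₂ * schreierDist K ψ' h₁ h₂ := by
  obtain ⟨f, hfH, hf_fix, hf_fin⟩ := H.exists_retraction_of_finiteIndex
  obtain ⟨N, hN⟩ := exists_word_length_le_of_finite hf_fin fun x _ => hψ'gen x
  obtain ⟨C₁, hC₁⟩ :=
    exists_word_length_le_of_finite (Set.finite_range ψ) fun x _ => hψ'gen x
  obtain ⟨C₂, hC₂⟩ :=
      exists_word_length_le_of_finite (finite_range_telescope_steps hf_fin ψ') <| by
    rintro _ ⟨⟨g, a⟩, rfl⟩
    exact hψgen _ (H.mul_mem (H.inv_mem (hfH g)) (hfH _))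
  refine ⟨max 1 C₁, max 1 C₂, N, le_max_left _ _, le_max_left _ _, fun g => ?_,
    fun h₁ hh₁ h₂ hh₂ => ⟨?_, ?_⟩⟩
  · obtain ⟨u, hu, hlen⟩ := hN _ ⟨g, rfl⟩
    exact ⟨f g, hfH g, (schreierDist_le_length u (by simp [hu, K.one_mem])).trans hlen⟩
  · calc schreierDist K ψ' h₁ h₂ ≤ C₁ * schreierDist K ψ h₁ h₂ :=
          schreierDist_le_mul_of_telescope id
            (fun g a => by simpa using hC₁ _ ⟨a, rfl⟩) rfl (fun _ _ => rfl)
            (hψgen _ (H.mul_mem (H.inv_mem hh₁) hh₂))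
      _ ≤ max 1 C₁ * schreierDist K ψ h₁ h₂ := by gcongr; exact le_max_right _ _
  · calc schreierDist K ψ h₁ h₂ ≤ C₂ * schreierDist K ψ' h₁ h₂ :=
          schreierDist_le_mul_of_telescope f (fun g a => hC₂ _ ⟨(g, a), rfl⟩)
            (hf_fix h₁ hh₁)
            (fun g hg => hf_fix g (by simpa using H.mul_mem (hKH hg) hh₂)) (hψ'gen _)
      _ ≤ max 1 C₂ * schreierDist K ψ' h₁ h₂ := by gcongr; exact le_max_right _ _

/-- Let `K ≤ H ≤ G` with `[G:H] < ∞`, and let `ψ, ψ'` be symmetric semigroup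
presentations of `H` and `G` respectively. Then there are `M₁, M₂ ≥ 1` and `N ≥ 0`
such that every vertex of the Schreier graph `X(G,K,ψ')` is within `d'`-distance
`N` of a vertex of `X(H,K,ψ)`, and on the vertices of `X(H,K,ψ)` one has
`d'(y₁,y₂)/M₁ ≤ d(y₁,y₂) ≤ M₂ d'(y₁,y₂)`. -/
theorem stmt14 {G : Type*} [Group G] (H : Subgroup G) [H.FiniteIndex]
    (K : Subgroup G) (hKH : K ≤ H)
    {A A' : Type*} [Fintype A] [Fintype A']
    (ψ : A → G) (ψ' : A' → G)
    (hψH : ∀ a, ψ a ∈ H)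
    (hψgen : ∀ h ∈ H, ∃ w : List A, (w.map ψ).prod = h)
    (hψsymm : ∃ ι : A → A, Function.Involutive ι ∧ ∀ a, ψ (ι a) = (ψ a)⁻¹)
    (hψ'gen : ∀ g : G, ∃ w : List A', (w.map ψ').prod = g)
    (hψ'symm : ∃ ι' : A' → A', Function.Involutive ι' ∧
      ∀ a, ψ' (ι' a) = (ψ' a)⁻¹) :
    ∃ M₁ M₂ N : ℕ, 1 ≤ M₁ ∧ 1 ≤ M₂ ∧
      (∀ g : G, ∃ h ∈ H, schreierDist K ψ' g h ≤ N) ∧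
      ∀ h₁ ∈ H, ∀ h₂ ∈ H,
        schreierDist K ψ' h₁ h₂ ≤ M₁ * schreierDist K ψ h₁ h₂ ∧
        schreierDist K ψ h₁ h₂ ≤ M₂ * schreierDist K ψ' h₁ h₂ :=
  stmt14_general H K hKH ψ ψ' hψgen hψ'gen
end
end
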